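/- Let M be an effective t-motif over K and write M ⊗ K†{t} for M ⊗_{K[t]} K†{t}, with σ extended τ-semilinearly by σ(m⊗f) = σ(m)⊗τ(f). Suppose m ∈ M ⊗ K†{t} and h ∈ K†{t} with h ≠ 0 satisfy τ(h)·m = h·σ(m) (i.e. the element m/h of M ⊗ Frac(K†{t}) is σ-invariant). Then there exist a nonzero polynomial h′ ∈ K[t] all of whose coefficients c satisfy c^q = c (i.e. h′ has coefficients in k) and an element m′ ∈ M ⊗ K†{t} with σ(m′) = m′ such that h′·m = h·m′. (This expresses that H_an(M,k(t)) = H_an(M,k[t]) ⊗_{k[t]} k(t).) -/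

import Mathlib

/-!
A nonzero restricted series `h` divides, inside `K†{t}`, a nonzero polynomial. Scale `h` so that
its largest coefficient norm is `1`, attained last in degree `d`, and write `h = P + g` with `P`
the truncation of `h` in degrees `≤ d`: then `P` is monic with coefficients of norm `≤ 1`, and
`‖g‖ < 1`. Division by such a `P` does not increase the Gauss norm, so dividing `X ^ d` by `P`
and then repeatedly dividing the error term `-(quotient * g)` converges geometrically, giving
`X ^ d = q * h + r` with `deg r < d`.

Hence the ideal of polynomials `P` with `P • m ∈ h • K†{t} ^ r` is nonzero, and the equation
`τ h • m = h • σ m` makes it stable under `τ`. Its monic generator `G` is then fixed by `τ`, so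
the product of the Frobenius conjugates of `G` lies in the ideal and has coefficients in `𝔽_p`;
this is `h'`. Finally `h' • m = h • m'` together with `τ h' = h'` forces `σ m' = m'`.
-/

open Polynomial

def IsRestricted (Kd : Type) [NormedField Kd] (f : PowerSeries Kd) : Prop :=
  Filter.Tendsto (fun i => ‖(PowerSeries.coeff i) f‖) Filter.atTop (nhds 0)

open Filter Topology
open scoped PowerSeries.WithPiTopology

theorem exists_forall_le_of_tendsto_zero {u : ℕ → ℝ} (hu : Tendsto u atTop (𝓝 0))
    (hpos : ∃ j, 0 < u j) : ∃ i, ∀ j, u j ≤ u i := by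
  obtain ⟨γ, hγ, hmax⟩ :=
    hu.isCompact_insert_range.exists_isGreatest (Set.insert_nonempty _ _)
  obtain ⟨j, hj⟩ := hpos
  rcases hγ with rfl | ⟨i, rfl⟩
  · exact absurd (hmax (Set.mem_insert_of_mem _ ⟨j, rfl⟩)) hj.not_ge
  · exact ⟨i, fun j => hmax (Set.mem_insert_of_mem _ ⟨j, rfl⟩)⟩

theorem exists_lt_forall_le_of_tendsto_zero {u : ℕ → ℝ} (hu : Tendsto u atTop (𝓝 0))
    {c : ℝ} (hc : 0 < c) (hlt : ∀ i, u i < c) : ∃ γ < c, ∀ i, u i ≤ γ := by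
  obtain ⟨γ, hγ, hmax⟩ :=
    hu.isCompact_insert_range.exists_isGreatest (Set.insert_nonempty _ _)
  refine ⟨γ, ?_, fun i => hmax (Set.mem_insert_of_mem _ ⟨i, rfl⟩)⟩
  rcases hγ with rfl | ⟨i, rfl⟩
  exacts [hc, hlt i]

theorem PowerSeries.monic_trunc_succ {R : Type*} [Semiring R] [Nontrivial R] {f : PowerSeries R}
    {d : ℕ} (hd : coeff d f = 1) : (trunc (d + 1) f).Monic ∧ (trunc (d + 1) f).natDegree = d := by
  have hdeg : (trunc (d + 1) f).natDegree = d :=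
    natDegree_eq_of_le_of_coeff_ne_zero (Nat.lt_succ_iff.1 (natDegree_trunc_lt f d))
      (by simp [coeff_trunc, hd])
  exact ⟨by rw [Monic, leadingCoeff, hdeg, coeff_trunc, if_pos d.lt_succ_self, hd], hdeg⟩

theorem Polynomial.coeff_X_pow_divByMonic_eq_zero {R : Type*} [Ring R] [Nontrivial R]
    {P : R[X]} (hP : P.Monic) {j a : ℕ} (h : j < a) : (X ^ j /ₘ P).coeff a = 0 :=
  coeff_eq_zero_of_natDegree_lt <| by rw [natDegree_divByMonic _ hP, natDegree_X_pow]; omega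

theorem Polynomial.coeff_X_pow_modByMonic_eq_zero {R : Type*} [Ring R] [Nontrivial R]
    {P : R[X]} {j a : ℕ} (h : j < a) : (X ^ j %ₘ P).coeff a = 0 :=
  coeff_eq_zero_of_natDegree_lt <| natDegree_modByMonic_le_left.trans_lt <| by
    rwa [natDegree_X_pow]

section NormedField

variable {Kd : Type} [NormedField Kd] {f g : PowerSeries Kd}

theorem isRestricted_iff_isRestricted_one : IsRestricted Kd f ↔ PowerSeries.IsRestricted 1 f := by
  simp [IsRestricted, PowerSeries.isRestricted_iff']

theorem isRestricted_iff_eventually_norm_coeff_le :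
    IsRestricted Kd f ↔ ∀ ε > 0, ∀ᶠ a in atTop, ‖PowerSeries.coeff a f‖ ≤ ε := by
  refine ⟨fun hf ε hε => hf.eventually (ge_mem_nhds hε), fun hf => ?_⟩
  refine tendsto_order.2 ⟨fun a ha => Eventually.of_forall fun i => ha.trans_le (norm_nonneg _),
    fun ε hε => (hf (ε / 2) (half_pos hε)).mono fun i hi => hi.trans_lt (half_lt_self hε)⟩

theorem isRestricted_zero : IsRestricted Kd 0 :=
  isRestricted_iff_isRestricted_one.2 (PowerSeries.isRestricted_zero 1)

theorem IsRestricted.add (hf : IsRestricted Kd f) (hg : IsRestricted Kd g) :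
    IsRestricted Kd (f + g) :=
  isRestricted_iff_isRestricted_one.2 <| PowerSeries.isRestricted.add 1
    (isRestricted_iff_isRestricted_one.1 hf) (isRestricted_iff_isRestricted_one.1 hg)

theorem IsRestricted.neg (hf : IsRestricted Kd f) : IsRestricted Kd (-f) :=
  isRestricted_iff_isRestricted_one.2 <|
    PowerSeries.isRestricted.neg 1 (isRestricted_iff_isRestricted_one.1 hf)

theorem IsRestricted.sub (hf : IsRestricted Kd f) (hg : IsRestricted Kd g) :
    IsRestricted Kd (f - g) :=
  sub_eq_add_neg f g ▸ hf.add hg.neg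

theorem isRestricted_coe (P : Kd[X]) : IsRestricted Kd (P : PowerSeries Kd) :=
  tendsto_const_nhds.congr' <| (eventually_gt_atTop P.natDegree).mono fun i hi => by
    simp [coeff_eq_zero_of_natDegree_lt hi]

theorem IsRestricted.map_iterateFrobenius (p n : ℕ) [Fact p.Prime] [CharP Kd p]
    (hf : IsRestricted Kd f) : IsRestricted Kd (PowerSeries.map (iterateFrobenius Kd p n) f) := by
  have hpn : p ^ n ≠ 0 := pow_ne_zero n (Fact.out : p.Prime).ne_zero
  simpa [IsRestricted, iterateFrobenius_def, zero_pow hpn] using hf.pow (p ^ n)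

theorem IsRestricted.exists_dominant_coeff (hf : IsRestricted Kd f) (hf0 : f ≠ 0) :
    ∃ d, ∃ γ < ‖PowerSeries.coeff d f‖,
      (∀ i, ‖PowerSeries.coeff i f‖ ≤ ‖PowerSeries.coeff d f‖) ∧
      ∀ i, d < i → ‖PowerSeries.coeff i f‖ ≤ γ := by
  set u := fun i => ‖PowerSeries.coeff i f‖
  obtain ⟨j, hj⟩ : ∃ j, PowerSeries.coeff j f ≠ 0 := by
    by_contra! h
    exact hf0 (PowerSeries.ext fun j => by simp [h j])
  obtain ⟨i₀, hi₀⟩ := exists_forall_le_of_tendsto_zero hf ⟨j, norm_pos_iff.2 hj⟩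
  have hM : 0 < u i₀ := (norm_pos_iff.2 hj).trans_le (hi₀ j)
  obtain ⟨N, hN⟩ := eventually_atTop.1 (hf.eventually (gt_mem_nhds hM))
  set d := Nat.findGreatest (fun i => u i = u i₀) N
  have hi₀N : i₀ ≤ N := not_lt.1 fun h => (hN i₀ h.le).ne rfl
  have hd : u d = u i₀ := Nat.findGreatest_spec (P := fun i => u i = u i₀) hi₀N rfl
  have hlt : ∀ i, d < i → u i < u d := fun i hi => by
    rw [hd]
    rcases le_or_gt i N with hiN | hiN
    · exact (hi₀ i).lt_of_ne (Nat.findGreatest_is_greatest hi hiN)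
    · exact hN i hiN.le
  obtain ⟨γ, hγ, hγu⟩ := exists_lt_forall_le_of_tendsto_zero
    (hf.comp (tendsto_add_atTop_nat (d + 1))) (hd ▸ hM) fun i => hlt (i + (d + 1)) (by omega)
  refine ⟨d, γ, hγ, fun i => (hi₀ i).trans hd.ge, fun i hi => ?_⟩
  simpa [Nat.sub_add_cancel hi] using hγu (i - (d + 1))

theorem PowerSeries.coeff_tsum {G : ℕ → PowerSeries Kd} (hG : Summable G) (a : ℕ) :
    coeff a (∑' k, G k) = ∑' k, coeff a (G k) :=
  ((PowerSeries.WithPiTopology.hasSum_iff_hasSum_coeff Kd).1 hG.hasSum a).tsum_eq.symm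

theorem Polynomial.norm_coeff_X_pow_le_one (j a : ℕ) : ‖((X : Kd[X]) ^ j).coeff a‖ ≤ 1 := by
  rw [coeff_X_pow]; split_ifs <;> simp

end NormedField

section Ultrametric

variable {Kd : Type} [NormedField Kd] [IsUltrametricDist Kd] {f g : PowerSeries Kd}

theorem IsRestricted.mul (hf : IsRestricted Kd f) (hg : IsRestricted Kd g) :
    IsRestricted Kd (f * g) :=
  isRestricted_iff_isRestricted_one.2 <| PowerSeries.isRestricted.mul 1
    (isRestricted_iff_isRestricted_one.1 hf) (isRestricted_iff_isRestricted_one.1 hg)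

theorem IsRestricted.C_mul (c : Kd) (hf : IsRestricted Kd f) :
    IsRestricted Kd (PowerSeries.C c * f) :=
  (isRestricted_iff_isRestricted_one.2 (PowerSeries.isRestricted_C 1 c)).mul hf

theorem isRestricted_mulVec {ι : Type*} [Fintype ι] {S : Matrix ι ι (PowerSeries Kd)}
    {v : ι → PowerSeries Kd} (hS : ∀ i j, IsRestricted Kd (S i j))
    (hv : ∀ j, IsRestricted Kd (v j)) (i : ι) : IsRestricted Kd (S.mulVec v i) :=
  Finset.sum_induction _ _ (fun _ _ => IsRestricted.add) isRestricted_zero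
    fun j _ => (hS i j).mul (hv j)

theorem PowerSeries.norm_coeff_mul_le {B C : ℝ} (hB : 0 ≤ B) (hC : 0 ≤ C)
    (hf : ∀ i, ‖coeff i f‖ ≤ B) (hg : ∀ i, ‖coeff i g‖ ≤ C) (a : ℕ) :
    ‖coeff a (f * g)‖ ≤ B * C := by
  rw [coeff_mul]
  refine IsUltrametricDist.norm_sum_le_of_forall_le_of_nonneg (mul_nonneg hB hC) fun i _ => ?_
  rw [norm_mul]
  exact mul_le_mul (hf _) (hg _) (norm_nonneg _) hB

theorem Polynomial.exists_map_integer_of_norm_coeff_le_one {P : Kd[X]}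
    (hP : ∀ i, ‖P.coeff i‖ ≤ 1) :
    ∃ P₀ : (NormedField.valuation (K := Kd)).integer[X],
      P₀.map (Subring.subtype _) = P ∧ (P.Monic → P₀.Monic) := by
  have hcoeffs : (P.coeffs : Set Kd) ⊆ (NormedField.valuation (K := Kd)).integer := by
    intro x hx
    obtain ⟨n, -, rfl⟩ := mem_coeffs_iff.1 hx
    simpa [Valuation.mem_integer_iff, ← NNReal.coe_le_coe] using hP n
  exact ⟨P.toSubring _ hcoeffs, map_toSubring _ _ _, (monic_toSubring _ _ _).2⟩

theorem Polynomial.norm_coeff_divByMonic_le_one {P f : Kd[X]} (hP : P.Monic)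
    (hPc : ∀ i, ‖P.coeff i‖ ≤ 1) (hf : ∀ i, ‖f.coeff i‖ ≤ 1) (i : ℕ) :
    ‖(f /ₘ P).coeff i‖ ≤ 1 ∧ ‖(f %ₘ P).coeff i‖ ≤ 1 := by
  obtain ⟨P₀, rfl, hP₀⟩ := exists_map_integer_of_norm_coeff_le_one hPc
  obtain ⟨f₀, rfl, -⟩ := exists_map_integer_of_norm_coeff_le_one hf
  rw [← map_divByMonic _ (hP₀ hP), ← map_modByMonic _ (hP₀ hP), coeff_map, coeff_map]
  have h := fun x : (NormedField.valuation (K := Kd)).integer =>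
    (Valuation.mem_integer_iff _ _).1 x.2
  simp only [NormedField.valuation_apply, ← NNReal.coe_le_coe, coe_nnnorm] at h
  exact ⟨h _, h _⟩

theorem Polynomial.norm_coeff_X_pow_divByMonic_le_one {P : Kd[X]} (hP : P.Monic)
    (hPc : ∀ i, ‖P.coeff i‖ ≤ 1) (j a : ℕ) : ‖(X ^ j /ₘ P).coeff a‖ ≤ 1 :=
  (norm_coeff_divByMonic_le_one hP hPc (norm_coeff_X_pow_le_one j) a).1

theorem Polynomial.norm_coeff_X_pow_modByMonic_le_one {P : Kd[X]} (hP : P.Monic)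
    (hPc : ∀ i, ‖P.coeff i‖ ≤ 1) (j a : ℕ) : ‖(X ^ j %ₘ P).coeff a‖ ≤ 1 :=
  (norm_coeff_divByMonic_le_one hP hPc (norm_coeff_X_pow_le_one j) a).2

variable [CompleteSpace Kd]

theorem PowerSeries.summable_of_norm_coeff_le {G : ℕ → PowerSeries Kd} {b : ℕ → ℝ}
    (hGb : ∀ k a, ‖coeff a (G k)‖ ≤ b k) (hb : Tendsto b atTop (𝓝 0)) : Summable G :=
  (PowerSeries.WithPiTopology.summable_iff_summable_coeff Kd).2 fun a =>
    NonarchimedeanAddGroup.summable_of_tendsto_cofinite_zero <| by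
      rw [Nat.cofinite_eq_atTop]
      exact squeeze_zero_norm (fun k => hGb k a) hb

theorem isRestricted_tsum {G : ℕ → PowerSeries Kd} {b : ℕ → ℝ}
    (hG : ∀ k, IsRestricted Kd (G k)) (hGb : ∀ k a, ‖PowerSeries.coeff a (G k)‖ ≤ b k)
    (hb : Tendsto b atTop (𝓝 0)) : IsRestricted Kd (∑' k, G k) := by
  refine isRestricted_iff_eventually_norm_coeff_le.2 fun ε hε => ?_
  obtain ⟨K, hK⟩ := eventually_atTop.1 (hb.eventually (ge_mem_nhds hε))
  filter_upwards [(eventually_all_finset (Finset.range K)).2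
    fun k _ => isRestricted_iff_eventually_norm_coeff_le.1 (hG k) ε hε] with a ha
  rw [PowerSeries.coeff_tsum (PowerSeries.summable_of_norm_coeff_le hGb hb)]
  refine IsUltrametricDist.norm_tsum_le_of_forall_le_of_nonneg hε.le fun k => ?_
  rcases lt_or_ge k K with hk | hk
  exacts [ha k (Finset.mem_range.2 hk), (hGb k a).trans (hK k hk)]

/-- The continuous extension to `K†{t}` of the linear map `X ^ j ↦ Q j` on polynomials. -/
noncomputable def extendSeries (Q : ℕ → Kd[X]) (f : PowerSeries Kd) : PowerSeries Kd :=
  ∑' j, PowerSeries.coeff j f • (Q j : PowerSeries Kd)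

section extendSeries

variable {Q : ℕ → Kd[X]} (hQ : ∀ j a, ‖(Q j).coeff a‖ ≤ 1)
include hQ

theorem summable_extendSeries (hf : IsRestricted Kd f) :
    Summable fun j => PowerSeries.coeff j f • (Q j : PowerSeries Kd) :=
  PowerSeries.summable_of_norm_coeff_le (fun j a => by
    simpa [norm_mul] using mul_le_of_le_one_right (norm_nonneg _) (hQ j a)) hf

variable (hQtri : ∀ j a, j < a → (Q j).coeff a = 0)
include hQtri

theorem norm_coeff_extendSeries_le (hf : IsRestricted Kd f) {a : ℕ} {B : ℝ} (hB : 0 ≤ B)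
    (hfB : ∀ j, a ≤ j → ‖PowerSeries.coeff j f‖ ≤ B) :
    ‖PowerSeries.coeff a (extendSeries Q f)‖ ≤ B := by
  rw [extendSeries, PowerSeries.coeff_tsum (summable_extendSeries hQ hf)]
  refine IsUltrametricDist.norm_tsum_le_of_forall_le_of_nonneg hB fun j => ?_
  rw [PowerSeries.coeff_smul, Polynomial.coeff_coe, smul_eq_mul, norm_mul]
  rcases lt_or_ge j a with hja | haj
  · simpa [hQtri j a hja] using hB
  · exact (mul_le_of_le_one_right (norm_nonneg _) (hQ j a)).trans (hfB j haj)

theorem IsRestricted.extendSeries (hf : IsRestricted Kd f) :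
    IsRestricted Kd (extendSeries Q f) := by
  refine isRestricted_iff_eventually_norm_coeff_le.2 fun ε hε => ?_
  obtain ⟨N, hN⟩ := eventually_atTop.1 (isRestricted_iff_eventually_norm_coeff_le.1 hf ε hε)
  exact eventually_atTop.2 ⟨N, fun a ha =>
    norm_coeff_extendSeries_le hQ hQtri hf hε.le fun j hj => hN j (ha.trans hj)⟩

end extendSeries

noncomputable def divSeries (P : Kd[X]) : PowerSeries Kd → PowerSeries Kd :=
  extendSeries fun j => X ^ j /ₘ P

noncomputable def modSeries (P : Kd[X]) : PowerSeries Kd → PowerSeries Kd :=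
  extendSeries fun j => X ^ j %ₘ P

section division

variable {P : Kd[X]} (hP : P.Monic) (hPc : ∀ i, ‖P.coeff i‖ ≤ 1)
include hP hPc

theorem IsRestricted.divSeries (hf : IsRestricted Kd f) : IsRestricted Kd (divSeries P f) :=
  hf.extendSeries (norm_coeff_X_pow_divByMonic_le_one hP hPc)
    fun _ _ => coeff_X_pow_divByMonic_eq_zero hP

theorem norm_coeff_divSeries_le (hf : IsRestricted Kd f) {B : ℝ} (hB : 0 ≤ B)
    (hfB : ∀ j, ‖PowerSeries.coeff j f‖ ≤ B) (a : ℕ) :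
    ‖PowerSeries.coeff a (divSeries P f)‖ ≤ B :=
  norm_coeff_extendSeries_le (norm_coeff_X_pow_divByMonic_le_one hP hPc)
    (fun _ _ => coeff_X_pow_divByMonic_eq_zero hP) hf hB fun j _ => hfB j

theorem norm_coeff_modSeries_le (hf : IsRestricted Kd f) {B : ℝ} (hB : 0 ≤ B)
    (hfB : ∀ j, ‖PowerSeries.coeff j f‖ ≤ B) (a : ℕ) :
    ‖PowerSeries.coeff a (modSeries P f)‖ ≤ B :=
  norm_coeff_extendSeries_le (norm_coeff_X_pow_modByMonic_le_one hP hPc)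
    (fun _ _ => coeff_X_pow_modByMonic_eq_zero) hf hB fun j _ => hfB j

theorem coeff_modSeries_eq_zero (hf : IsRestricted Kd f) {a : ℕ} (ha : P.natDegree ≤ a) :
    PowerSeries.coeff a (modSeries P f) = 0 := by
  rw [modSeries, extendSeries,
    PowerSeries.coeff_tsum (summable_extendSeries (norm_coeff_X_pow_modByMonic_le_one hP hPc) hf)]
  refine (tsum_congr fun j => ?_).trans tsum_zero
  have : degree (X ^ j %ₘ P) < a :=
    (degree_modByMonic_lt _ hP).trans_le (degree_le_of_natDegree_le ha)
  simp [coeff_eq_zero_of_degree_lt this]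

theorem divSeries_mul_add_modSeries (hf : IsRestricted Kd f) :
    divSeries P f * P + modSeries P f = f := by
  have hdiv := summable_extendSeries (norm_coeff_X_pow_divByMonic_le_one hP hPc) hf
  have hmod := summable_extendSeries (norm_coeff_X_pow_modByMonic_le_one hP hPc) hf
  have hsum := (hdiv.hasSum.mul_right (P : PowerSeries Kd)).add hmod.hasSum
  refine hsum.unique ((PowerSeries.hasSum_of_monomials_self f).congr_fun fun j => ?_)
  rw [smul_mul_assoc, ← smul_add, ← Polynomial.coe_mul, ← Polynomial.coe_add, mul_comm, add_comm,
    modByMonic_add_div]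
  simp [PowerSeries.monomial_eq_C_mul_X_pow, PowerSeries.smul_eq_C_mul]

theorem isRestricted_and_norm_coeff_iterate_le {γ : ℝ} (hγ : 0 ≤ γ) (hg : IsRestricted Kd g)
    (hgγ : ∀ i, ‖PowerSeries.coeff i g‖ ≤ γ) (hf : IsRestricted Kd f)
    (hf1 : ∀ i, ‖PowerSeries.coeff i f‖ ≤ 1) (k : ℕ) :
    IsRestricted Kd ((fun f => -(divSeries P f * g))^[k] f) ∧
      ∀ a, ‖PowerSeries.coeff a ((fun f => -(divSeries P f * g))^[k] f)‖ ≤ γ ^ k := by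
  induction k with
  | zero => exact ⟨hf, by simpa using hf1⟩
  | succ k ih =>
    rw [Function.iterate_succ_apply']
    refine ⟨((ih.1.divSeries hP hPc).mul hg).neg, fun a => ?_⟩
    rw [map_neg, norm_neg, pow_succ]
    exact PowerSeries.norm_coeff_mul_le (pow_nonneg hγ k) hγ
      (norm_coeff_divSeries_le hP hPc ih.1 (pow_nonneg hγ k) ih.2) hgγ a

end division

theorem exists_X_pow_eq_mul_add {h : PowerSeries Kd} (hh : IsRestricted Kd h) {d : ℕ}
    (hd : PowerSeries.coeff d h = 1) (hle : ∀ i, ‖PowerSeries.coeff i h‖ ≤ 1) {γ : ℝ}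
    (hγ : γ < 1) (hγh : ∀ i, d < i → ‖PowerSeries.coeff i h‖ ≤ γ) :
    ∃ q r : PowerSeries Kd, IsRestricted Kd q ∧ (∀ i, d ≤ i → PowerSeries.coeff i r = 0) ∧
      PowerSeries.X ^ d = q * h + r := by
  have hγ0 : 0 ≤ γ := (norm_nonneg _).trans (hγh (d + 1) d.lt_succ_self)
  set P := PowerSeries.trunc (d + 1) h
  have hPcoeff : ∀ i, P.coeff i = if i < d + 1 then PowerSeries.coeff i h else 0 :=
    fun i => PowerSeries.coeff_trunc i (d + 1) h
  obtain ⟨hP, hPdeg⟩ : P.Monic ∧ P.natDegree = d := PowerSeries.monic_trunc_succ hd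
  have hPc : ∀ i, ‖P.coeff i‖ ≤ 1 := fun i => by rw [hPcoeff]; split_ifs <;> simp [hle]
  set g := h - (P : PowerSeries Kd) with hgdef
  have hg : ∀ i, ‖PowerSeries.coeff i g‖ ≤ γ := fun i => by
    rcases lt_or_ge d i with hi | hi
    · simpa [g, hPcoeff, show ¬ i < d + 1 by omega] using hγh i hi
    · simpa [g, hPcoeff, show i < d + 1 by omega] using hγ0
  -- `F k` is the error term after `k` divisions by `P`; it decays like `γ ^ k`
  set F : ℕ → PowerSeries Kd :=
    fun k => (fun f => -(divSeries P f * g))^[k] (PowerSeries.X ^ d)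
  have hF : ∀ k, IsRestricted Kd (F k) ∧ ∀ a, ‖PowerSeries.coeff a (F k)‖ ≤ γ ^ k :=
    isRestricted_and_norm_coeff_iterate_le hP hPc hγ0 (hh.sub (isRestricted_coe P)) hg
    (by simpa using isRestricted_coe (X ^ d : Kd[X]))
    (fun a => by simpa [PowerSeries.coeff_X_pow] using norm_coeff_X_pow_le_one (Kd := Kd) d a)
  have hgeom : Tendsto (γ ^ ·) atTop (𝓝 0) := tendsto_pow_atTop_nhds_zero_of_lt_one hγ0 hγ
  have hdivF := fun k => norm_coeff_divSeries_le hP hPc (hF k).1 (pow_nonneg hγ0 k) (hF k).2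
  have hq := PowerSeries.summable_of_norm_coeff_le hdivF hgeom
  have hr := PowerSeries.summable_of_norm_coeff_le
    (fun k => norm_coeff_modSeries_le hP hPc (hF k).1 (pow_nonneg hγ0 k) (hF k).2) hgeom
  refine ⟨∑' k, divSeries P (F k), ∑' k, modSeries P (F k),
    isRestricted_tsum (fun k => (hF k).1.divSeries hP hPc) hdivF hgeom, fun i hi => ?_, ?_⟩
  · rw [PowerSeries.coeff_tsum hr]
    exact (tsum_congr fun k => coeff_modSeries_eq_zero hP hPc (hF k).1 (hPdeg.trans_le hi)).trans
      tsum_zero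
  have hstep : ∀ k, divSeries P (F k) * h + modSeries P (F k) = F k - F (k + 1) := fun k => by
    rw [show F (k + 1) = _ from Function.iterate_succ_apply' _ _ _]
    linear_combination divSeries_mul_add_modSeries hP hPc (hF k).1 - divSeries P (F k) * hgdef
  have hFlim : Tendsto F atTop (𝓝 0) :=
    (PowerSeries.WithPiTopology.tendsto_iff_coeff_tendsto Kd _ _ _).2 fun a => by
      simpa using squeeze_zero_norm (fun k => (hF k).2 a) hgeom
  have hpartial := ((hq.hasSum.mul_right h).add hr.hasSum).tendsto_sum_nat
  simp_rw [hstep, Finset.sum_range_sub'] at hpartial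
  exact tendsto_nhds_unique (by simpa [F] using tendsto_const_nhds.sub hFlim) hpartial

theorem IsRestricted.exists_polynomial_eq_mul {h : PowerSeries Kd} (hh : IsRestricted Kd h)
    (h0 : h ≠ 0) :
    ∃ P : Kd[X], P ≠ 0 ∧ ∃ v, IsRestricted Kd v ∧ (P : PowerSeries Kd) = h * v := by
  obtain ⟨d, γ, hγ, hmax, hγh⟩ := hh.exists_dominant_coeff h0
  set c := PowerSeries.coeff d h
  have hc : 0 < ‖c‖ := ((norm_nonneg _).trans (hγh (d + 1) d.lt_succ_self)).trans_lt hγ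
  have hcoeff : ∀ i, ‖PowerSeries.coeff i (PowerSeries.C c⁻¹ * h)‖ =
      ‖PowerSeries.coeff i h‖ / ‖c‖ := fun i => by
    rw [PowerSeries.coeff_C_mul, norm_mul, norm_inv, inv_mul_eq_div]
  obtain ⟨q, r, hq, hr, hqr⟩ := exists_X_pow_eq_mul_add (hh.C_mul c⁻¹)
    (by rw [PowerSeries.coeff_C_mul, inv_mul_cancel₀ (norm_pos_iff.1 hc)])
    (fun i => by rw [hcoeff, div_le_one hc]; exact hmax i) ((div_lt_one hc).2 hγ)
    (fun i hi => by rw [hcoeff]; exact div_le_div_of_nonneg_right (hγh i hi) hc.le)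
  have hP : ((X ^ d - PowerSeries.trunc d r : Kd[X]) : PowerSeries Kd) =
      PowerSeries.X ^ d - r := by
    ext i
    rcases lt_or_ge i d with hi | hi
    · simp [PowerSeries.coeff_trunc, PowerSeries.coeff_X_pow, hi, hi.ne]
    · simp [PowerSeries.coeff_trunc, PowerSeries.coeff_X_pow, hr i hi, not_lt.2 hi]
  refine ⟨X ^ d - PowerSeries.trunc d r, fun h0 => ?_, PowerSeries.C c⁻¹ * q, hq.C_mul c⁻¹, ?_⟩
  · simpa [PowerSeries.coeff_trunc] using congrArg (coeff · d) h0
  · rw [hP, hqr]; ring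

end Ultrametric

theorem Polynomial.map_map_castHom {R S : Type*} [CommRing R] [CommRing S] (p : ℕ) [CharP R p]
    [CharP S p] (f : R →+* S) (H₀ : (ZMod p)[X]) :
    (H₀.map (ZMod.castHom dvd_rfl R)).map f = H₀.map (ZMod.castHom dvd_rfl S) := by
  rw [map_map, RingHom.ext_zmod (f.comp _)]

section FixedPolynomial

variable {F : Type*} [Field F]

theorem Ideal.exists_monic_mem_map_eq_self {D : Ideal F[X]} (hD : D ≠ ⊥) {φ : F →+* F}
    (hφ : ∀ P ∈ D, P.map φ ∈ D) : ∃ G ∈ D, G.Monic ∧ G.map φ = G := by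
  classical
  set G := normalize (Submodule.IsPrincipal.generator D)
  have hG : G.Monic := monic_normalize
    ((Submodule.IsPrincipal.eq_bot_iff_generator_eq_zero D).not.1 hD)
  have hGD : ∀ P, P ∈ D ↔ G ∣ P := fun P => by
    rw [Submodule.IsPrincipal.mem_iff_generator_dvd, normalize_dvd_iff]
  have hGG : G ∈ D := (hGD G).2 dvd_rfl
  exact ⟨G, hGG, hG, eq_of_monic_of_dvd_of_natDegree_le hG (hG.map φ) ((hGD _).1 (hφ G hGG))
    (hG.natDegree_map φ).le⟩

theorem Polynomial.map_prod_map_pow_eq_self {R : Type*} [CommRing R] [IsDomain R] {φ : R →+* R}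
    {n : ℕ} {G : R[X]} (hG0 : G ≠ 0) (hG : G.map (φ ^ n) = G) :
    (∏ i ∈ Finset.range n, G.map (φ ^ i)).map φ = ∏ i ∈ Finset.range n, G.map (φ ^ i) := by
  have hshift : (∏ i ∈ Finset.range n, G.map (φ ^ i)).map φ =
      ∏ i ∈ Finset.range n, G.map (φ ^ (i + 1)) := by
    simp only [Polynomial.map_prod, map_map, pow_succ', RingHom.mul_def]
  refine hshift.trans (mul_right_cancel₀ hG0 ?_)
  calc (∏ i ∈ Finset.range n, G.map (φ ^ (i + 1))) * G
      = ∏ i ∈ Finset.range (n + 1), G.map (φ ^ i) := by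
        rw [Finset.prod_range_succ', pow_zero, RingHom.one_def, map_id]
    _ = (∏ i ∈ Finset.range n, G.map (φ ^ i)) * G := by rw [Finset.prod_range_succ, hG]

variable (p : ℕ) [Fact p.Prime] [CharP F p]

theorem Ideal.exists_monic_mem_map_frobenius_eq_self {n : ℕ} (hn : 0 < n) {D : Ideal F[X]}
    (hD : D ≠ ⊥) (hφ : ∀ P ∈ D, P.map (iterateFrobenius F p n) ∈ D) :
    ∃ H ∈ D, H.Monic ∧ H.map (frobenius F p) = H := by
  obtain ⟨G, hGD, hG, hGφ⟩ := D.exists_monic_mem_map_eq_self hD hφ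
  rw [iterateFrobenius_eq_pow] at hGφ
  -- the norm of `G` from `𝔽_{p ^ n}` down to `𝔽_p`
  refine ⟨∏ i ∈ Finset.range n, G.map (frobenius F p ^ i), D.mem_of_dvd ?_ hGD,
    monic_prod_of_monic _ _ fun i _ => hG.map _, map_prod_map_pow_eq_self hG.ne_zero hGφ⟩
  simpa [RingHom.one_def] using
    Finset.dvd_prod_of_mem (fun i => G.map (frobenius F p ^ i)) (Finset.mem_range.2 hn)

theorem Polynomial.exists_map_zmod_of_map_frobenius_eq_self {H : F[X]}
    (hH : H.map (frobenius F p) = H) :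
    ∃ H₀ : (ZMod p)[X], H₀.map (ZMod.castHom dvd_rfl F) = H := by
  refine mem_lifts _ |>.1 <| (lifts_iff_coeff_lifts _).2 fun i => ?_
  have hi : H.coeff i ^ p = H.coeff i := by simpa [frobenius_def] using congrArg (coeff · i) hH
  exact (bot_le : ⊥ ≤ (ZMod.castHom dvd_rfl F).fieldRange)
    ((Subfield.mem_bot_iff_pow_eq_self F p).2 hi)

end FixedPolynomial

section MultiplierIdeal

variable {Kd : Type} [NormedField Kd] {ι : Type*} [Fintype ι]

def multiplierIdeal [IsUltrametricDist Kd] (m : ι → PowerSeries Kd) (h : PowerSeries Kd) :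
    Ideal Kd[X] where
  carrier := {P | ∃ v : ι → PowerSeries Kd, (∀ i, IsRestricted Kd (v i)) ∧
    (P : PowerSeries Kd) • m = h • v}
  add_mem' := by
    rintro P Q ⟨v, hv, hPv⟩ ⟨w, hw, hQw⟩
    exact ⟨v + w, fun i => (hv i).add (hw i), by rw [coe_add, add_smul, hPv, hQw, smul_add]⟩
  zero_mem' := ⟨0, fun _ => isRestricted_zero, by simp⟩
  smul_mem' := by
    rintro c P ⟨v, hv, hPv⟩
    exact ⟨(c : PowerSeries Kd) • v, fun i => (isRestricted_coe c).mul (hv i), by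
      rw [smul_eq_mul, coe_mul, mul_smul, hPv, smul_comm]⟩

variable {φ : Kd →+* Kd} {S : Matrix ι ι (PowerSeries Kd)} {m : ι → PowerSeries Kd}
  {h : PowerSeries Kd}

theorem coe_map_smul_eq_smul_mulVec (hφh : PowerSeries.map φ h ≠ 0)
    (heq : PowerSeries.map φ h • m = h • S.mulVec fun j => PowerSeries.map φ (m j))
    {P : Kd[X]} {v : ι → PowerSeries Kd} (hPv : (P : PowerSeries Kd) • m = h • v) :
    ((P.map φ : Kd[X]) : PowerSeries Kd) • m = h • S.mulVec fun j => PowerSeries.map φ (v j) := by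
  have hmap : ∀ (c : PowerSeries Kd) (w : ι → PowerSeries Kd), (fun j => PowerSeries.map φ
      ((c • w) j)) = PowerSeries.map φ c • fun j => PowerSeries.map φ (w j) :=
    fun c w => funext fun j => by simp
  refine smul_right_injective _ hφh ?_
  calc PowerSeries.map φ h • ((P.map φ : Kd[X]) : PowerSeries Kd) • m
      = h • S.mulVec fun j => PowerSeries.map φ (((P : PowerSeries Kd) • m) j) := by
        rw [polynomial_map_coe, smul_comm, heq, hmap, Matrix.mulVec_smul, smul_comm]
    _ = PowerSeries.map φ h • h • S.mulVec fun j => PowerSeries.map φ (v j) := by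
        rw [hPv, hmap, Matrix.mulVec_smul, smul_comm]

theorem mulVec_map_eq_self (h0 : h ≠ 0) (hφh : PowerSeries.map φ h ≠ 0)
    (heq : PowerSeries.map φ h • m = h • S.mulVec fun j => PowerSeries.map φ (m j))
    {P : Kd[X]} (hPφ : P.map φ = P) {v : ι → PowerSeries Kd}
    (hPv : (P : PowerSeries Kd) • m = h • v) :
    (S.mulVec fun j => PowerSeries.map φ (v j)) = v :=
  smul_right_injective _ h0 <| (hPφ ▸ coe_map_smul_eq_smul_mulVec hφh heq hPv).symm.trans hPv

variable [IsUltrametricDist Kd]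

theorem map_mem_multiplierIdeal
    (hφ : ∀ f, IsRestricted Kd f → IsRestricted Kd (PowerSeries.map φ f))
    (hS : ∀ i j, IsRestricted Kd (S i j)) (hφh : PowerSeries.map φ h ≠ 0)
    (heq : PowerSeries.map φ h • m = h • S.mulVec fun j => PowerSeries.map φ (m j))
    {P : Kd[X]} (hP : P ∈ multiplierIdeal m h) : P.map φ ∈ multiplierIdeal m h := by
  obtain ⟨v, hv, hPv⟩ := hP
  exact ⟨_, isRestricted_mulVec hS fun j => hφ _ (hv j), coe_map_smul_eq_smul_mulVec hφh heq hPv⟩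

end MultiplierIdeal

theorem stmt_6
    (p n : ℕ) [Fact p.Prime] (hn : 0 < n)
    (K : Type) [Field K] [CharP K p]
    (Kd : Type) [NontriviallyNormedField Kd] [CompleteSpace Kd]
    [CharP Kd p] [Algebra K Kd]
    (hna : IsNonarchimedean (fun x : Kd => ‖x‖))
    (r : ℕ) (S : Matrix (Fin r) (Fin r) (Polynomial K))
    -- the matrix of `σ` on `M ⊗ K†{t}`:
    (S' : Matrix (Fin r) (Fin r) (PowerSeries Kd))
    (hS' : S' = S.map (Polynomial.coeToPowerSeries.ringHom.comp
        (Polynomial.mapRingHom (algebraMap K Kd))))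
    (m : Fin r → PowerSeries Kd) (hm : ∀ i, IsRestricted Kd (m i))
    (h : PowerSeries Kd) (hh : h ≠ 0) (hhres : IsRestricted Kd h)
    (heq : ∀ i, PowerSeries.map (iterateFrobenius Kd p n) h * m i =
        h * S'.mulVec (fun j => PowerSeries.map (iterateFrobenius Kd p n) (m j)) i) :
    ∃ (h' : Polynomial K) (m' : Fin r → PowerSeries Kd),
      h' ≠ 0 ∧ (∀ i, (h'.coeff i) ^ p ^ n = h'.coeff i) ∧
      (∀ i, IsRestricted Kd (m' i)) ∧
      (S'.mulVec (fun j => PowerSeries.map (iterateFrobenius Kd p n) (m' j)) = m') ∧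
      ∀ i, (Polynomial.coeToPowerSeries.ringHom.comp
          (Polynomial.mapRingHom (algebraMap K Kd)) h') * m i = h * m' i := by
  have : IsUltrametricDist Kd := IsUltrametricDist.isUltrametricDist_of_isNonarchimedean_norm hna
  have hS'res : ∀ i j, IsRestricted Kd (S' i j) := fun i j => by
    rw [hS']; exact isRestricted_coe _
  have hτh : PowerSeries.map (iterateFrobenius Kd p n) h ≠ 0 :=
    (map_ne_zero_iff _ (PowerSeries.map_injective _ (iterateFrobenius Kd p n).injective)).2 hh
  obtain ⟨P, hP0, v, hv, hPv⟩ := hhres.exists_polynomial_eq_mul hh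
  have hPD : P ∈ multiplierIdeal m h := ⟨v • m, fun i => hv.mul (hm i), by rw [hPv, mul_smul]⟩
  obtain ⟨H, hHD, hH, hHfrob⟩ := Ideal.exists_monic_mem_map_frobenius_eq_self p hn
    ((Submodule.ne_bot_iff _).2 ⟨P, hPD, hP0⟩) fun Q hQ => map_mem_multiplierIdeal
      (fun _ => IsRestricted.map_iterateFrobenius p n) hS'res hτh (funext heq) hQ
  obtain ⟨H₀, rfl⟩ := Polynomial.exists_map_zmod_of_map_frobenius_eq_self p hHfrob
  obtain ⟨m', hm', hHm⟩ := hHD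
  refine ⟨H₀.map (ZMod.castHom dvd_rfl K), m', fun h0 => hH.ne_zero ?_, fun i => ?_, hm',
    mulVec_map_eq_self hh hτh (funext heq) (map_map_castHom p _ H₀) hHm, fun i => ?_⟩
  · rw [← map_map_castHom p (algebraMap K Kd), h0, Polynomial.map_zero]
  · rw [coeff_map, ← map_pow, ZMod.pow_card_pow]
  · rw [RingHom.comp_apply, coe_mapRingHom, map_map_castHom, coeToPowerSeries.ringHom_apply]
    exact congrFun hHm i
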